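/- Let M be a matroid and V' ⊆ V a ρ-DBS of rank k. Then there is a probability distribution over independent sets S ⊆ V' of size k such that (i) every v ∈ V' is in S with probability exactly 1/ρ, and (ii) for every T ⊆ V', the probability that T ⊆ S is at most (1/ρ)^{|T|}. -/

import Mathlib

open Set ENNReal

namespace Paper

variable {α : Type*}

/-- The rank (in `ℕ∞`) of a set `X` with respect to an independence predicate `Indep`:
the supremum of the cardinalities of independent subsets of `X`. -/
noncomputable def rkP (Indep : Set α → Prop) (X : Set α) : ℕ∞ :=
  ⨆ I ∈ {I | Indep I ∧ I ⊆ X}, I.encard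

/-- The rank of a set in a matroid. -/
noncomputable def rk (M : Matroid α) (X : Set α) : ℕ∞ := rkP M.Indep X

/-- Independence in the contraction `M/A`. -/
def CIndep (M : Matroid α) (A S : Set α) : Prop :=
  S ⊆ M.E \ A ∧ ∃ B, M.IsBasis' B A ∧ M.Indep (S ∪ B)

/-- The rank of a set in the contraction `M/A`. -/
noncomputable def crk (M : Matroid α) (A X : Set α) : ℕ∞ := rkP (CIndep M A) X

/-- The density `|X| / rank X` of a set `X` (with respect to an independence
predicate), valued in `ℝ≥0∞`; the empty set has density `0` and a nonempty set of
rank `0` has density `∞`. -/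
noncomputable def densP (Indep : Set α → Prop) (X : Set α) : ℝ≥0∞ :=
  (X.encard : ℝ≥0∞) / (rkP Indep X : ℝ≥0∞)

/-- The density of a set in a matroid. -/
noncomputable def dens (M : Matroid α) (X : Set α) : ℝ≥0∞ := densP M.Indep X

/-- A `ρ`-Density-Balanced-Subset with respect to an independence predicate. -/
def IsDBSP (Indep : Set α → Prop) (ρ : ℕ) (V' : Set α) : Prop :=
  densP Indep V' = ρ ∧ ∀ U ⊆ V', densP Indep U ≤ ρ

/-- A `ρ`-DBS in a matroid `M`. -/
def IsDBS (M : Matroid α) (ρ : ℕ) (V' : Set α) : Prop :=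
  V' ⊆ M.E ∧ IsDBSP M.Indep ρ V'

/-- Independence in the `ρ`-fold matroid union `ρM`: the set can be partitioned
into `ρ` independent sets of `M`. -/
def UnionIndep (M : Matroid α) (ρ : ℕ) (S : Set α) : Prop :=
  ∃ B : Fin ρ → Set α, (∀ i, M.Indep (B i)) ∧
    Pairwise (Function.onFun Disjoint B) ∧ S = ⋃ i, B i

end Paper

set_option linter.unusedSectionVars false
set_option maxHeartbeats 1000000

namespace Paper

section Aux

variable {α : Type*} {M : Matroid α} {X Y I J V' B1 B2 : Set α}

lemma encard_le_rkP (hI : M.Indep I) (hIX : I ⊆ X) : I.encard ≤ rkP M.Indep X :=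
  le_iSup₂ (f := fun I (_ : I ∈ {I | M.Indep I ∧ I ⊆ X}) => I.encard) I ⟨hI, hIX⟩

lemma rkP_eq_encard (hX : X ⊆ M.E) (hI : M.IsBasis I X) : rkP M.Indep X = I.encard := by
  refine le_antisymm (iSup₂_le fun J hJ => ?_) (encard_le_rkP hI.indep hI.subset)
  obtain ⟨J', hJ', hJJ'⟩ := hJ.1.subset_isBasis_of_subset hJ.2 hX
  exact le_trans (encard_mono hJJ') (hJ'.encard_eq_encard hI).le

lemma rkP_le_encard (X : Set α) : rkP M.Indep X ≤ X.encard :=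
  iSup₂_le fun _ hJ => encard_mono hJ.2

lemma rkP_mono {P : Set α → Prop} (h : X ⊆ Y) : rkP P X ≤ rkP P Y :=
  iSup₂_le fun J hJ => le_iSup₂ (f := fun I (_ : I ∈ {I | P I ∧ I ⊆ Y}) => I.encard) J ⟨hJ.1, hJ.2.trans h⟩

lemma indep_of_encard_le_rkP (hX : X ⊆ M.E) (hfin : X.Finite) (h : X.encard ≤ rkP M.Indep X) :
    M.Indep X := by
  obtain ⟨I, hI⟩ := M.exists_isBasis X hX
  rw [rkP_eq_encard hX hI] at h
  rw [hfin.eq_of_subset_of_encard_le' hI.subset h] at hI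
  exact hI.indep


lemma rkP_submod (hX : X ⊆ M.E) (hY : Y ⊆ M.E) :
    rkP M.Indep (X ∪ Y) + rkP M.Indep (X ∩ Y) ≤ rkP M.Indep X + rkP M.Indep Y := by
  obtain ⟨I, hI⟩ := M.exists_isBasis (X ∩ Y) (inter_subset_left.trans hX)
  obtain ⟨J, hJ, hIJ⟩ := hI.indep.subset_isBasis_of_subset
    (hI.subset.trans (inter_subset_left.trans subset_union_left)) (union_subset hX hY)
  rw [rkP_eq_encard (union_subset hX hY) hJ, rkP_eq_encard (inter_subset_left.trans hX) hI]
  have h1 : (J ∩ X).encard + (J ∩ Y).encard = J.encard + (J ∩ (X ∩ Y)).encard := by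
    rw [← encard_union_add_encard_inter]
    have h2 : J ∩ X ∪ J ∩ Y = J := by
      rw [← inter_union_distrib_left, inter_eq_self_of_subset_left hJ.subset]
    have h3 : J ∩ X ∩ (J ∩ Y) = J ∩ (X ∩ Y) := by
      ext x; simp only [mem_inter_iff]; tauto
    rw [h2, h3]
  calc J.encard + I.encard ≤ J.encard + (J ∩ (X ∩ Y)).encard := by
        exact add_le_add_right (encard_mono (subset_inter hIJ hI.subset)) _
    _ = (J ∩ X).encard + (J ∩ Y).encard := h1.symm
    _ ≤ rkP M.Indep X + rkP M.Indep Y :=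
        add_le_add (encard_le_rkP (hJ.indep.inter_right X) inter_subset_right)
          (encard_le_rkP (hJ.indep.inter_right Y) inter_subset_right)

/-- Nat-valued rank. -/
noncomputable def rn (M : Matroid α) (X : Set α) : ℕ := (rkP M.Indep X).toNat

section FinRank

variable (hE : V' ⊆ M.E) (hfin : V'.Finite)

include hE hfin

lemma cast_rn (hX : X ⊆ V') : (rn M X : ℕ∞) = rkP M.Indep X := by
  rw [rn, ENat.coe_toNat]
  exact fun h => ((rkP_le_encard (M := M) X).trans_lt
    (lt_of_le_of_lt (encard_mono hX) (hfin.encard_lt_top))).ne (h ▸ rfl)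

lemma rn_mono (hXY : X ⊆ Y) (hY : Y ⊆ V') : rn M X ≤ rn M Y := by
  rw [← Nat.cast_le (α := ℕ∞), cast_rn hE hfin (hXY.trans hY), cast_rn hE hfin hY]
  exact rkP_mono hXY

lemma rn_le_ncard (hX : X ⊆ V') : rn M X ≤ X.ncard := by
  rw [← Nat.cast_le (α := ℕ∞), cast_rn hE hfin hX, (hfin.subset hX).cast_ncard_eq]
  exact rkP_le_encard X

lemma rn_eq_ncard_of_indep (hI : M.Indep X) (hX : X ⊆ V') : rn M X = X.ncard := by
  rw [← Nat.cast_inj (R := ℕ∞), cast_rn hE hfin hX, (hfin.subset hX).cast_ncard_eq]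
  exact le_antisymm (rkP_le_encard X) (encard_le_rkP hI subset_rfl)

lemma indep_of_ncard_le_rn (hX : X ⊆ V') (h : X.ncard ≤ rn M X) : M.Indep X := by
  refine indep_of_encard_le_rkP (hX.trans hE) (hfin.subset hX) ?_
  rw [← (hfin.subset hX).cast_ncard_eq, ← cast_rn hE hfin hX]
  exact_mod_cast h

lemma rn_submod (hX : X ⊆ V') (hY : Y ⊆ V') :
    rn M (X ∪ Y) + rn M (X ∩ Y) ≤ rn M X + rn M Y := by
  have := rkP_submod (M := M) (hX.trans hE) (hY.trans hE)
  rw [← cast_rn hE hfin (union_subset hX hY), ← cast_rn hE hfin hX, ← cast_rn hE hfin hY,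
    ← cast_rn hE hfin (inter_subset_left.trans hX)] at this
  exact_mod_cast this

end FinRank

/-- Rado-style defect version of matroid coloring. -/
theorem rado (M : Matroid α) {V' : Set α} (hE : V' ⊆ M.E) (hfin : V'.Finite)
    {ρ : ℕ} (hρ : 0 < ρ) :
    ∀ (n : ℕ) (A : α → Finset (Fin ρ)),
      (∑ v ∈ hfin.toFinset, (A v).card) = n →
      (∀ K ⊆ V', K.ncard ≤ ∑ i : Fin ρ, rn M {v ∈ K | i ∈ A v}) →
      ∃ c : α → Fin ρ, (∀ v ∈ V', c v ∈ A v) ∧ ∀ i : Fin ρ, M.Indep {v ∈ V' | c v = i} := by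
  intro n
  induction n using Nat.strong_induction_on with
  | _ n IH =>
  intro A hsum hcond
  by_cases hsmall : ∀ v ∈ V', (A v).card ≤ 1
  · -- base case
    have hex : ∀ v ∈ V', (A v).Nonempty := by
      intro v hv
      by_contra hne
      have h0 : ∀ i : Fin ρ, {u ∈ ({v} : Set α) | i ∈ A u} = (∅ : Set α) := by
        intro i; ext u
        simp only [mem_sep_iff, mem_singleton_iff, mem_empty_iff_false, iff_false, not_and,
          mem_setOf_eq]
        intro h hi
        exact hne ⟨i, h ▸ hi⟩
      have := hcond {v} (singleton_subset_iff.mpr hv)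
      rw [ncard_singleton] at this
      have hz : ∑ i : Fin ρ, rn M {u ∈ ({v} : Set α) | i ∈ A u} = 0 := by
        refine Finset.sum_eq_zero fun i _ => ?_
        rw [h0 i]
        exact Nat.le_zero.mp (by simpa using rn_le_ncard hE hfin (empty_subset V'))
      omega
    classical
    set c : α → Fin ρ := fun v => if h : (A v).Nonempty then h.choose else ⟨0, hρ⟩ with hcdef
    have hcA : ∀ v ∈ V', c v ∈ A v := by
      intro v hv
      have h := hex v hv
      simp only [hcdef, dif_pos h]
      exact h.choose_spec
    refine ⟨c, hcA, fun i => ?_⟩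
    · set K : Set α := {v ∈ V' | c v = i} with hK
      have hKV : K ⊆ V' := fun v hv => hv.1
      have claim1 : {v ∈ K | i ∈ A v} = K := by
        ext v
        simp only [mem_sep_iff, and_iff_left_iff_imp]
        intro hvK
        exact hvK.2 ▸ hcA v hvK.1
      have claim2 : ∀ j : Fin ρ, j ≠ i → {v ∈ K | j ∈ A v} = (∅ : Set α) := by
        intro j hj; ext v
        simp only [mem_sep_iff, mem_empty_iff_false, iff_false, not_and]
        intro hvK hjA
        exact hj (Finset.card_le_one.mp (hsmall v hvK.1) j hjA (c v) (hcA v hvK.1) ▸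
          (hvK.2 ▸ rfl))
      have hsum2 : ∑ j : Fin ρ, rn M {v ∈ K | j ∈ A v} = rn M K := by
        rw [Finset.sum_eq_single i]
        · rw [claim1]
        · intro j _ hj
          rw [claim2 j hj]
          exact Nat.le_zero.mp (by simpa using rn_le_ncard hE hfin (empty_subset V'))
        · intro h; exact absurd (Finset.mem_univ i) h
      have := hcond K hKV
      rw [hsum2] at this
      exact indep_of_ncard_le_rn hE hfin hKV this
  · -- inductive step
    push_neg at hsmall
    obtain ⟨v0, hv0, hcard⟩ := hsmall
    obtain ⟨i1, hi1, i2, hi2, hne⟩ := Finset.one_lt_card.mp hcard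
    classical
    set A1 : α → Finset (Fin ρ) := Function.update A v0 ((A v0).erase i1) with hA1
    set A2 : α → Finset (Fin ρ) := Function.update A v0 ((A v0).erase i2) with hA2
    have hv0fin : v0 ∈ hfin.toFinset := hfin.mem_toFinset.mpr hv0
    have hdec : ∀ j ∈ A v0,
        ∑ v ∈ hfin.toFinset, ((Function.update A v0 ((A v0).erase j)) v).card < n := by
      intro j hj
      set A' := Function.update A v0 ((A v0).erase j) with hA'
      have h1 : ∑ v ∈ hfin.toFinset, (A' v).card
          = (∑ v ∈ hfin.toFinset.erase v0, (A' v).card) + (A' v0).card :=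
        (Finset.sum_erase_add _ _ hv0fin).symm
      have h2 : (∑ v ∈ hfin.toFinset.erase v0, (A v).card) + (A v0).card = n := by
        rw [Finset.sum_erase_add _ _ hv0fin, hsum]
      have h3 : ∀ v ∈ hfin.toFinset.erase v0, (A' v).card = (A v).card := by
        intro v hv
        rw [hA', Function.update_of_ne (Finset.ne_of_mem_erase hv)]
      have h4 : (A' v0).card = (A v0).card - 1 := by
        rw [hA', Function.update_self, Finset.card_erase_of_mem hj]
      rw [h1, Finset.sum_congr rfl h3, h4]
      omega
    have hsum1 : ∑ v ∈ hfin.toFinset, (A1 v).card < n := hdec i1 hi1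
    have hsum2' : ∑ v ∈ hfin.toFinset, (A2 v).card < n := hdec i2 hi2
    by_cases hc1 : ∀ K ⊆ V', K.ncard ≤ ∑ i : Fin ρ, rn M {v ∈ K | i ∈ A1 v}
    · obtain ⟨c, hcA, hcI⟩ := IH _ hsum1 A1 rfl hc1
      refine ⟨c, fun v hv => ?_, hcI⟩
      have := hcA v hv
      by_cases hvv : v = v0
      · subst hvv; rw [hA1, Function.update_self] at this; exact Finset.mem_of_mem_erase this
      · rwa [hA1, Function.update_of_ne hvv] at this
    by_cases hc2 : ∀ K ⊆ V', K.ncard ≤ ∑ i : Fin ρ, rn M {v ∈ K | i ∈ A2 v}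
    · obtain ⟨c, hcA, hcI⟩ := IH _ hsum2' A2 rfl hc2
      refine ⟨c, fun v hv => ?_, hcI⟩
      have := hcA v hv
      by_cases hvv : v = v0
      · subst hvv; rw [hA2, Function.update_self] at this; exact Finset.mem_of_mem_erase this
      · rwa [hA2, Function.update_of_ne hvv] at this
    -- both fail: contradiction
    exfalso
    push_neg at hc1 hc2
    obtain ⟨K1, hK1V, hlt1⟩ := hc1
    obtain ⟨K2, hK2V, hlt2⟩ := hc2
    have hv0K : ∀ (K : Set α) (A' : α → Finset (Fin ρ)), A' = Function.update A v0 ((A v0).erase i1) ∨ A' = Function.update A v0 ((A v0).erase i2) → K ⊆ V' →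
        (∑ i : Fin ρ, rn M {v ∈ K | i ∈ A' v} < K.ncard) → v0 ∈ K := by
      intro K A' hA' hKV hlt
      by_contra hv0K
      have : ∀ i : Fin ρ, {v ∈ K | i ∈ A' v} = {v ∈ K | i ∈ A v} := by
        intro i; ext v
        simp only [mem_sep_iff, and_congr_right_iff]
        intro hvK
        have hvv0 : v ≠ v0 := fun h => hv0K (h ▸ hvK)
        rcases hA' with h | h <;> rw [h, Function.update_of_ne hvv0]
      simp_rw [this] at hlt
      exact absurd (hcond K hKV) (not_le.mpr hlt)
    have hv01 : v0 ∈ K1 := hv0K K1 A1 (Or.inl hA1) hK1V hlt1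
    have hv02 : v0 ∈ K2 := hv0K K2 A2 (Or.inr hA2) hK2V hlt2
    set X : Fin ρ → Set α := fun i => {v ∈ K1 | i ∈ A1 v} with hX
    set Y : Fin ρ → Set α := fun i => {v ∈ K2 | i ∈ A2 v} with hY
    set Z : Fin ρ → Set α := fun i => {v ∈ K1 ∪ K2 | i ∈ A v} with hZ
    set W : Fin ρ → Set α := fun i => {v ∈ (K1 ∩ K2) \ {v0} | i ∈ A v} with hW
    have hXV : ∀ i, X i ⊆ V' := fun i v hv => hK1V hv.1
    have hYV : ∀ i, Y i ⊆ V' := fun i v hv => hK2V hv.1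
    have hXY : ∀ i, X i ∪ Y i = Z i := by
      intro i
      ext v
      simp only [hX, hY, hZ, mem_union, mem_sep_iff, mem_setOf_eq]
      by_cases hvv : v = v0
      · subst hvv
        rw [hA1, hA2, Function.update_self, Function.update_self,
          Finset.mem_erase, Finset.mem_erase]
        have hor : i ≠ i1 ∨ i ≠ i2 := by
          rcases eq_or_ne i i1 with h | h
          · exact Or.inr (h ▸ hne)
          · exact Or.inl h
        constructor
        · rintro (⟨_, _, h⟩ | ⟨_, _, h⟩) <;> exact ⟨Or.inl hv01, h⟩
        · rintro ⟨_, h⟩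
          rcases hor with h' | h'
          · exact Or.inl ⟨hv01, h', h⟩
          · exact Or.inr ⟨hv02, h', h⟩
      · rw [hA1, hA2, Function.update_of_ne hvv, Function.update_of_ne hvv]
        tauto
    have hWXY : ∀ i, W i ⊆ X i ∩ Y i := by
      intro i v hv
      obtain ⟨⟨⟨h1, h2⟩, hv0'⟩, hiA⟩ := hv
      have hvv : v ≠ v0 := by simpa using hv0'
      constructor
      · exact ⟨h1, by rw [hA1, Function.update_of_ne hvv]; exact hiA⟩
      · exact ⟨h2, by rw [hA2, Function.update_of_ne hvv]; exact hiA⟩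
    have key : ∀ i, rn M (Z i) + rn M (W i) ≤ rn M (X i) + rn M (Y i) := by
      intro i
      have h1 := rn_submod hE hfin (hXV i) (hYV i)
      rw [hXY i] at h1
      have h2 : rn M (W i) ≤ rn M (X i ∩ Y i) :=
        rn_mono hE hfin (hWXY i) fun v hv => hK1V hv.1.1
      omega
    have hsumkey : (∑ i : Fin ρ, rn M (Z i)) + (∑ i : Fin ρ, rn M (W i)) ≤
        (∑ i : Fin ρ, rn M (X i)) + (∑ i : Fin ρ, rn M (Y i)) := by
      rw [← Finset.sum_add_distrib, ← Finset.sum_add_distrib]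
      exact Finset.sum_le_sum fun i _ => key i
    have hZc : (K1 ∪ K2).ncard ≤ ∑ i : Fin ρ, rn M (Z i) :=
      hcond (K1 ∪ K2) (union_subset hK1V hK2V)
    have hWc : ((K1 ∩ K2) \ {v0}).ncard ≤ ∑ i : Fin ρ, rn M (W i) :=
      hcond ((K1 ∩ K2) \ {v0}) (fun v hv => hK1V hv.1.1)
    have hK1fin : K1.Finite := hfin.subset hK1V
    have hK2fin : K2.Finite := hfin.subset hK2V
    have hcards : (K1 ∪ K2).ncard + (K1 ∩ K2).ncard = K1.ncard + K2.ncard :=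
      ncard_union_add_ncard_inter K1 K2 hK1fin hK2fin
    have hdiff : ((K1 ∩ K2) \ {v0}).ncard = (K1 ∩ K2).ncard - 1 :=
      ncard_diff_singleton_of_mem ⟨hv01, hv02⟩
    have hpos : 0 < (K1 ∩ K2).ncard :=
      (ncard_pos (hK1fin.inter_of_left K2)).mpr ⟨v0, hv01, hv02⟩
    have eX : (∑ i : Fin ρ, rn M (X i)) = ∑ i : Fin ρ, rn M {v ∈ K1 | i ∈ A1 v} := rfl
    have eY : (∑ i : Fin ρ, rn M (Y i)) = ∑ i : Fin ρ, rn M {v ∈ K2 | i ∈ A2 v} := rfl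
    omega

/-- Partition of a density-balanced set into `ρ` bases. -/
theorem exists_base_partition (M : Matroid α) {V' : Set α} (hE : V' ⊆ M.E) (hfin : V'.Finite)
    {ρ k : ℕ} (hρ : 0 < ρ) (hd : ∀ U ⊆ V', U.ncard ≤ ρ * rn M U)
    (hk : rn M V' = k) (hcard : V'.ncard = ρ * k) :
    ∃ B : Fin ρ → Set α, (∀ i, M.Indep (B i)) ∧ (∀ i, B i ⊆ V') ∧ (∀ i, (B i).ncard = k) ∧
      Pairwise (Function.onFun Disjoint B) ∧ (⋃ i, B i) = V' := by
  classical
  have hcond : ∀ K ⊆ V', K.ncard ≤ ∑ i : Fin ρ,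
      rn M {v ∈ K | i ∈ (Finset.univ : Finset (Fin ρ))} := by
    intro K hK
    have : ∀ i : Fin ρ, {v ∈ K | i ∈ (Finset.univ : Finset (Fin ρ))} = K := by
      intro i; ext v; simp [mem_sep_iff]
    simp only [this, Finset.sum_const, Finset.card_univ, Fintype.card_fin, smul_eq_mul]
    exact hd K hK
  obtain ⟨c, -, hcI⟩ := rado M hE hfin hρ _ (fun _ => (Finset.univ : Finset (Fin ρ))) rfl hcond
  set B : Fin ρ → Set α := fun i => {v ∈ V' | c v = i} with hB
  have hBV : ∀ i, B i ⊆ V' := fun i v hv => hv.1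
  have hBne : ∀ i, (B i).ncard = rn M (B i) :=
    fun i => (rn_eq_ncard_of_indep hE hfin (hcI i) (hBV i)).symm
  have hBk : ∀ i, (B i).ncard ≤ k := by
    intro i
    rw [hBne i, ← hk]
    exact rn_mono hE hfin (hBV i) subset_rfl
  have hBfin : ∀ i, (B i) = ↑(hfin.toFinset.filter (fun v => c v = i)) := by
    intro i; ext v
    simp only [hB, mem_sep_iff, Finset.coe_filter, mem_setOf_eq, Finset.mem_filter,
      hfin.mem_toFinset]
  have hsumB : ∑ i : Fin ρ, (B i).ncard = V'.ncard := by
    have hfib := Finset.card_eq_sum_card_fiberwise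
      (f := c) (s := hfin.toFinset) (t := (Finset.univ : Finset (Fin ρ)))
      (fun v _ => Finset.mem_univ (c v))
    rw [ncard_eq_toFinset_card V' hfin, hfib]
    refine Finset.sum_congr rfl fun i _ => ?_
    rw [hBfin i, ncard_coe_finset]
  have hBk' : ∀ i, (B i).ncard = k := by
    have hsum2 : ∑ i : Fin ρ, (B i).ncard = ∑ _i : Fin ρ, k := by
      rw [hsumB, hcard, Finset.sum_const, Finset.card_univ, Fintype.card_fin, smul_eq_mul]
    exact fun i => (Finset.sum_eq_sum_iff_of_le fun i _ => hBk i).mp hsum2 i (Finset.mem_univ i)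
  refine ⟨B, hcI, hBV, hBk', fun i j hij => ?_, ?_⟩
  · simp only [Function.onFun, disjoint_left]
    rintro v ⟨-, hvi⟩ ⟨-, hvj⟩
    exact hij (hvi ▸ hvj ▸ rfl)
  · ext v
    simp only [mem_iUnion, hB, mem_sep_iff]
    exact ⟨fun ⟨i, hv, _⟩ => hv, fun hv => ⟨c v, hv, rfl⟩⟩

lemma sym_exchange (M : Matroid α) (hE : V' ⊆ M.E) (hfin : V'.Finite)
    (hB1 : M.IsBasis B1 V') (hB2 : M.IsBasis B2 V') {e : α} (heB1 : e ∈ B1) (heB2 : e ∉ B2) :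
    ∃ f ∈ B2 \ B1, M.Indep (insert f (B1 \ {e})) ∧ M.Indep (insert e (B2 \ {f})) := by
  classical
  have hB1E : B1 ⊆ M.E := hB1.subset.trans hE
  have hB2E : B2 ⊆ M.E := hB2.subset.trans hE
  have heE : e ∈ M.E := hB1E heB1
  have heB2cl : e ∈ M.closure B2 := hB2.subset_closure (hB1.subset heB1)
  have hS : ∃ n, ∃ I, I ⊆ B2 ∧ e ∈ M.closure I ∧ I.ncard = n :=
    ⟨_, B2, subset_rfl, heB2cl, rfl⟩
  obtain ⟨I, hIB2, heI, hIn⟩ := Nat.find_spec hS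
  have hmin : ∀ J, J ⊆ B2 → e ∈ M.closure J → Nat.find hS ≤ J.ncard :=
    fun J h1 h2 => Nat.find_min' hS ⟨J, h1, h2, rfl⟩
  have hIfin : I.Finite := (hfin.subset hB2.subset).subset hIB2
  -- (a) for each f ∈ I, e ∉ cl (B2 \ {f})
  have claim_a : ∀ f ∈ I, e ∉ M.closure (B2 \ {f}) := by
    intro f hf hecl
    have hfB2 : f ∈ B2 := hIB2 hf
    have h1 : e ∉ M.closure (I \ {f}) := by
      intro h
      have := hmin (I \ {f}) (diff_subset.trans hIB2) h
      rw [ncard_diff_singleton_of_mem hf, hIn] at this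
      have hpos : 0 < I.ncard := (ncard_pos hIfin).mpr ⟨f, hf⟩
      omega
    have h2 : e ∈ M.closure (insert f (I \ {f})) \ M.closure (I \ {f}) := by
      rw [insert_diff_singleton, insert_eq_self.mpr hf]
      exact ⟨heI, h1⟩
    have h3 : f ∈ M.closure (insert e (I \ {f})) := (Matroid.closure_exchange h2).1
    have h4 : insert e (I \ {f}) ⊆ M.closure (B2 \ {f}) := by
      rw [insert_subset_iff]
      refine ⟨hecl, ?_⟩
      exact (diff_subset_diff_left hIB2).trans
        (M.subset_closure (B2 \ {f}) (diff_subset.trans hB2E))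
    have h5 : f ∈ M.closure (B2 \ {f}) :=
      M.closure_subset_closure_of_subset_closure h4 h3
    exact hB2.indep.notMem_closure_diff_of_mem hfB2 h5
  -- (b) some f ∈ I is not spanned by B1 \ {e}
  have claim_b : ∃ f ∈ I, f ∉ M.closure (B1 \ {e}) := by
    by_contra h
    push_neg at h
    have : e ∈ M.closure (B1 \ {e}) :=
      M.closure_subset_closure_of_subset_closure h heI
    exact hB1.indep.notMem_closure_diff_of_mem heB1 this
  obtain ⟨f, hfI, hfncl⟩ := claim_b
  have hfB2 : f ∈ B2 := hIB2 hfI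
  have hfB1 : f ∉ B1 := by
    intro h
    have hfe : f ≠ e := fun hh => heB2 (hh ▸ hfB2)
    exact hfncl (M.subset_closure (B1 \ {e}) (diff_subset.trans hB1E) ⟨h, hfe⟩)
  refine ⟨f, ⟨hfB2, hfB1⟩, ?_, ?_⟩
  · exact ((hB1.indep.diff {e}).insert_indep_iff).mpr (Or.inl ⟨hB2E hfB2, hfncl⟩)
  · exact ((hB2.indep.diff {f}).insert_indep_iff).mpr (Or.inl ⟨heE, claim_a f hfI⟩)

lemma basis_of_encard (hE : V' ⊆ M.E) (hfin : V'.Finite) (hI : M.Indep B1) (hBV : B1 ⊆ V')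
    (hcard : B1.encard = rkP M.Indep V') : M.IsBasis B1 V' := by
  obtain ⟨J, hJ, hBJ⟩ := hI.subset_isBasis_of_subset hBV hE
  have hJc : J.encard = B1.encard := by rw [hcard, rkP_eq_encard hE hJ]
  rwa [← ((hfin.subset hJ.subset).eq_of_subset_of_encard_le' hBJ hJc.le)] at hJ

lemma ind_congr {v : α} {s t : Set α} (h : v ∈ s ↔ v ∈ t) :
    s.indicator (1 : α → ℝ≥0∞) v = t.indicator 1 v := by
  by_cases hv : v ∈ t
  · rw [indicator_of_mem (h.mpr hv), indicator_of_mem hv]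
  · rw [indicator_of_notMem (fun hh => hv (h.mp hh)), indicator_of_notMem hv]

/-- Swap rounding: merging two bases with weights `β1 + β2 = 1`. -/
lemma merge_two (M : Matroid α) (hE : V' ⊆ M.E) (hfin : V'.Finite) {k : ℕ∞}
    (hk : rkP M.Indep V' = k) {β1 β2 : ℝ≥0∞} (hβ : β1 + β2 = 1) :
    ∀ (n : ℕ) (B1 B2 : Set α), M.Indep B1 → B1 ⊆ V' → B1.encard = k →
      M.Indep B2 → B2 ⊆ V' → B2.encard = k → (B1 \ B2).ncard = n →
      ∃ q : PMF (Set α),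
        (∀ C ∈ q.support, M.Indep C ∧ C ⊆ B1 ∪ B2 ∧ C.encard = k) ∧
        (∀ v : α, q.toOuterMeasure {S | v ∈ S} =
          β1 * B1.indicator 1 v + β2 * B2.indicator 1 v) ∧
        (∀ T : Finset α, q.toOuterMeasure {S | ↑T ⊆ S} ≤
          ∏ v ∈ T, (β1 * B1.indicator 1 v + β2 * B2.indicator 1 v)) := by
  have hβ1 : β1 ≤ 1 := hβ ▸ le_self_add
  have hβ2 : β2 ≤ 1 := hβ ▸ le_add_self
  have hβ1' : 1 - β2 = β1 := by
    rw [← hβ, ENNReal.add_sub_cancel_right (hβ2.trans_lt one_lt_top).ne]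
  intro n
  induction n with
  | zero =>
    intro B1 B2 hI1 hV1 hc1 hI2 hV2 hc2 hn
    have hfin1 : (B1 \ B2).Finite := (hfin.subset hV1).diff (t := B2)
    have hsub : B1 ⊆ B2 := by
      rw [← diff_eq_empty]
      exact (ncard_eq_zero hfin1).mp hn
    have heq : B1 = B2 := (hfin.subset hV2).eq_of_subset_of_encard_le' hsub (hc2.trans hc1.symm).le
    subst heq
    refine ⟨PMF.pure B1, ?_, ?_, ?_⟩
    · intro C hC
      rw [PMF.support_pure, mem_singleton_iff] at hC
      subst hC
      exact ⟨hI1, subset_union_left, hc1⟩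
    · intro v
      rw [PMF.toOuterMeasure_pure_apply]
      by_cases hv : v ∈ B1
      · rw [if_pos (show B1 ∈ {S | v ∈ S} from hv), indicator_of_mem hv, Pi.one_apply, mul_one, mul_one, hβ]
      · rw [if_neg (show B1 ∉ {S | v ∈ S} from hv), indicator_of_notMem hv, mul_zero, mul_zero, add_zero]
    · intro T
      rw [PMF.toOuterMeasure_pure_apply]
      by_cases hT : (↑T : Set α) ⊆ B1
      · rw [if_pos (show B1 ∈ {S | (↑T : Set α) ⊆ S} from hT)]
        refine le_of_eq (Finset.prod_eq_one fun v hv => ?_).symm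
        rw [indicator_of_mem (hT hv), Pi.one_apply, mul_one, mul_one, hβ]
      · rw [if_neg (show B1 ∉ {S | (↑T : Set α) ⊆ S} from hT)]
        exact zero_le
  | succ n IH =>
    intro B1 B2 hI1 hV1 hc1 hI2 hV2 hc2 hn
    classical
    have hfin1 : (B1 \ B2).Finite := (hfin.subset hV1).diff (t := B2)
    obtain ⟨e, he⟩ := (ncard_pos hfin1).mp (hn ▸ n.succ_pos)
    have hBs1 : M.IsBasis B1 V' := basis_of_encard hE hfin hI1 hV1 (hc1.trans hk.symm)
    have hBs2 : M.IsBasis B2 V' := basis_of_encard hE hfin hI2 hV2 (hc2.trans hk.symm)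
    obtain ⟨f, hf, hIb1', hIb2'⟩ := sym_exchange M hE hfin hBs1 hBs2 he.1 he.2
    have hef : e ≠ f := fun h => (h ▸ he.2) hf.1
    set B1' : Set α := insert f (B1 \ {e}) with hB1'def
    set B2' : Set α := insert e (B2 \ {f}) with hB2'def
    -- membership facts
    have heB1' : e ∉ B1' := by
      rw [hB1'def]
      simp [hef]
    have heB2' : e ∈ B2' := by rw [hB2'def]; exact mem_insert _ _
    have hfB1' : f ∈ B1' := by rw [hB1'def]; exact mem_insert _ _
    have hfB2' : f ∉ B2' := by
      rw [hB2'def]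
      simp [hef.symm]
    have hB1'v : ∀ v, v ≠ e → v ≠ f → (v ∈ B1' ↔ v ∈ B1) := by
      intro v hve hvf
      rw [hB1'def]
      simp only [mem_insert_iff, mem_diff, mem_singleton_iff, hvf, hve, false_or,
        and_true, not_false_iff]
    have hB2'v : ∀ v, v ≠ e → v ≠ f → (v ∈ B2' ↔ v ∈ B2) := by
      intro v hve hvf
      rw [hB2'def]
      simp only [mem_insert_iff, mem_diff, mem_singleton_iff, hvf, hve, false_or,
        and_true, not_false_iff]
    have hV1' : B1' ⊆ V' := insert_subset (hV2 hf.1) (diff_subset.trans hV1)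
    have hV2' : B2' ⊆ V' := insert_subset (hV1 he.1) (diff_subset.trans hV2)
    have hc1' : B1'.encard = k := by
      rw [hB1'def, encard_insert_of_notMem (fun h => hf.2 h.1),
        encard_diff_singleton_add_one he.1, hc1]
    have hc2' : B2'.encard = k := by
      rw [hB2'def, encard_insert_of_notMem (fun h => he.2 h.1),
        encard_diff_singleton_add_one hf.1, hc2]
    have hd1 : B1 \ B2' = (B1 \ B2) \ {e} := by
      ext v
      have h1 : v ∈ B1 → v ≠ f := fun h hh => hf.2 (hh ▸ h)
      rw [hB2'def]
      simp only [mem_diff, mem_insert_iff, mem_singleton_iff]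
      constructor
      · rintro ⟨hvB1, hv⟩
        push_neg at hv
        exact ⟨⟨hvB1, fun hvB2 => (h1 hvB1) (hv.2 hvB2)⟩, hv.1⟩
      · rintro ⟨⟨hvB1, hvB2⟩, hve⟩
        refine ⟨hvB1, ?_⟩
        push_neg
        exact ⟨hve, fun h => absurd h hvB2⟩
    have hd2 : B1' \ B2 = (B1 \ B2) \ {e} := by
      ext v
      rw [hB1'def]
      simp only [mem_diff, mem_insert_iff, mem_singleton_iff]
      constructor
      · rintro ⟨hv, hvB2⟩
        rcases hv with rfl | ⟨hvB1, hve⟩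
        · exact absurd hf.1 hvB2
        · exact ⟨⟨hvB1, hvB2⟩, hve⟩
      · rintro ⟨⟨hvB1, hvB2⟩, hve⟩
        exact ⟨Or.inr ⟨hvB1, hve⟩, hvB2⟩
    have hnd : ((B1 \ B2) \ {e}).ncard = n := by
      rw [ncard_diff_singleton_of_mem he, hn]
      omega
    obtain ⟨qa, hqaS, hqaM, hqaC⟩ :=
      IH B1 B2' hI1 hV1 hc1 hIb2' hV2' hc2' (by rw [hd1, hnd])
    obtain ⟨qb, hqbS, hqbM, hqbC⟩ :=
      IH B1' B2 hIb1' hV1' hc1' hI2 hV2 hc2 (by rw [hd2, hnd])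
    set q : PMF (Set α) :=
      (PMF.bernoulli β2.toNNReal ((ENNReal.toNNReal_mono ENNReal.one_ne_top hβ2).trans_eq ENNReal.toNNReal_one)).bind (fun b => if b then qb else qa) with hqdef
    have hmeas : ∀ s : Set (Set α),
        q.toOuterMeasure s = β1 * qa.toOuterMeasure s + β2 * qb.toOuterMeasure s := by
      intro s
      rw [hqdef, PMF.toOuterMeasure_bind_apply, tsum_bool, if_neg Bool.false_ne_true,
        if_pos rfl, PMF.bernoulli_apply, PMF.bernoulli_apply]
      simp only [Bool.cond_false, Bool.cond_true, ENNReal.coe_sub, ENNReal.coe_one,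
        ENNReal.coe_toNNReal (hβ2.trans_lt one_lt_top).ne, hβ1']
    -- abbreviations
    set x : α → ℝ≥0∞ := fun v => β1 * B1.indicator 1 v + β2 * B2.indicator 1 v with hx
    set xa : α → ℝ≥0∞ := fun v => β1 * B1.indicator 1 v + β2 * B2'.indicator 1 v with hxa
    set xb : α → ℝ≥0∞ := fun v => β1 * B1'.indicator 1 v + β2 * B2.indicator 1 v with hxb
    have hxav : ∀ v, v ≠ e → v ≠ f → xa v = x v := by
      intro v hve hvf
      rw [hxa, hx]
      simp only []
      rw [ind_congr (hB2'v v hve hvf)]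
    have hxbv : ∀ v, v ≠ e → v ≠ f → xb v = x v := by
      intro v hve hvf
      rw [hxb, hx]
      simp only []
      rw [ind_congr (hB1'v v hve hvf)]
    have hxaf0 : xa f = 0 := by
      rw [hxa]
      simp only []
      rw [indicator_of_notMem hf.2, indicator_of_notMem hfB2', mul_zero, mul_zero, add_zero]
    have hxbe0 : xb e = 0 := by
      rw [hxb]
      simp only []
      rw [indicator_of_notMem he.2, indicator_of_notMem heB1', mul_zero, mul_zero, add_zero]
    have hxae1 : xa e = 1 := by
      rw [hxa]
      simp only []
      rw [indicator_of_mem he.1, indicator_of_mem heB2', Pi.one_apply, mul_one, mul_one, hβ]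
    have hxbf1 : xb f = 1 := by
      rw [hxb]
      simp only []
      rw [indicator_of_mem hf.1, indicator_of_mem hfB1', Pi.one_apply, mul_one, mul_one, hβ]
    have hxe : x e = β1 := by
      rw [hx]
      simp only []
      rw [indicator_of_mem he.1, indicator_of_notMem he.2, Pi.one_apply, mul_one,
        mul_zero, add_zero]
    have hxf : x f = β2 := by
      rw [hx]
      simp only []
      rw [indicator_of_notMem hf.2, indicator_of_mem hf.1, Pi.one_apply, mul_one,
        mul_zero, zero_add]
    refine ⟨q, ?_, ?_, ?_⟩
    · intro C hC
      rw [hqdef, PMF.support_bind] at hC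
      simp only [mem_iUnion] at hC
      obtain ⟨b, -, hCb⟩ := hC
      cases b
      · simp only [if_neg Bool.false_ne_true] at hCb
        obtain ⟨h1, h2, h3⟩ := hqaS C hCb
        refine ⟨h1, h2.trans ?_, h3⟩
        rw [hB2'def]
        exact union_subset subset_union_left
          (insert_subset (Or.inl he.1) (diff_subset.trans subset_union_right))
      · simp only [if_pos rfl] at hCb
        obtain ⟨h1, h2, h3⟩ := hqbS C hCb
        refine ⟨h1, h2.trans ?_, h3⟩
        rw [hB1'def]
        exact union_subset
          (insert_subset (Or.inr hf.1) (diff_subset.trans subset_union_left))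
          subset_union_right
    · intro v
      rw [hmeas, hqaM, hqbM]
      show β1 * xa v + β2 * xb v = x v
      by_cases hve : v = e
      · subst hve
        rw [hxae1, hxbe0, hxe, mul_one, mul_zero, add_zero]
      by_cases hvf : v = f
      · subst hvf
        rw [hxaf0, hxbf1, hxf, mul_one, mul_zero, zero_add]
      · rw [hxav v hve hvf, hxbv v hve hvf, ← add_mul, hβ, one_mul]
    · intro T
      rw [hmeas]
      refine le_trans (add_le_add (mul_le_mul_right (hqaC T) β1)
        (mul_le_mul_right (hqbC T) β2)) ?_
      show β1 * ∏ v ∈ T, xa v + β2 * ∏ v ∈ T, xb v ≤ ∏ v ∈ T, x v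
      by_cases heT : e ∈ T <;> by_cases hfT : f ∈ T
      · rw [Finset.prod_eq_zero hfT hxaf0, Finset.prod_eq_zero heT hxbe0, mul_zero,
          mul_zero, add_zero]
        exact zero_le
      · rw [Finset.prod_eq_zero heT hxbe0, mul_zero, add_zero]
        rw [← Finset.mul_prod_erase T xa heT, hxae1, one_mul]
        have hcong : ∏ v ∈ T.erase e, xa v = ∏ v ∈ T.erase e, x v :=
          Finset.prod_congr rfl fun v hv => hxav v (Finset.ne_of_mem_erase hv)
            (fun h => hfT (h ▸ Finset.mem_of_mem_erase hv))
        rw [hcong, ← Finset.mul_prod_erase T x heT, hxe]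
      · rw [Finset.prod_eq_zero hfT hxaf0, mul_zero, zero_add]
        rw [← Finset.mul_prod_erase T xb hfT, hxbf1, one_mul]
        have hcong : ∏ v ∈ T.erase f, xb v = ∏ v ∈ T.erase f, x v :=
          Finset.prod_congr rfl fun v hv => hxbv v
            (fun h => heT (h ▸ Finset.mem_of_mem_erase hv)) (Finset.ne_of_mem_erase hv)
        rw [hcong, ← Finset.mul_prod_erase T x hfT, hxf]
      · have ha : ∏ v ∈ T, xa v = ∏ v ∈ T, x v :=
          Finset.prod_congr rfl fun v hv => hxav v (fun h => heT (h ▸ hv))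
            (fun h => hfT (h ▸ hv))
        have hb : ∏ v ∈ T, xb v = ∏ v ∈ T, x v :=
          Finset.prod_congr rfl fun v hv => hxbv v (fun h => heT (h ▸ hv))
            (fun h => hfT (h ▸ hv))
        rw [ha, hb, ← add_mul, hβ, one_mul]

/-- The fractional vector of a weighted list of sets. -/
noncomputable def xL (L : List (ℝ≥0∞ × Set α)) (v : α) : ℝ≥0∞ :=
  (L.map (fun p => p.1 * p.2.indicator 1 v)).sum

@[simp] lemma xL_nil (v : α) : xL ([] : List (ℝ≥0∞ × Set α)) v = 0 := rfl

@[simp] lemma xL_cons (p : ℝ≥0∞ × Set α) (L : List (ℝ≥0∞ × Set α)) (v : α) :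
    xL (p :: L) v = p.1 * p.2.indicator 1 v + xL L v := by
  simp [xL]

/-- `∑_C q(C)·1[T ⊆ C] = q{S | T ⊆ S}`. -/
lemma tsum_prod_ind (q : PMF (Set α)) (T : Finset α) :
    ∑' C, q C * ∏ v ∈ T, C.indicator (1 : α → ℝ≥0∞) v
      = q.toOuterMeasure {S | ↑T ⊆ S} := by
  classical
  rw [PMF.toOuterMeasure_apply]
  refine tsum_congr fun C => ?_
  rw [Set.indicator_apply]
  simp only [mem_setOf_eq]
  by_cases hC : (↑T : Set α) ⊆ C
  · rw [if_pos hC, Finset.prod_eq_one fun v hv => ?_, mul_one]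
    rw [indicator_of_mem (hC hv), Pi.one_apply]
  · obtain ⟨v, hvT, hvC⟩ := not_subset.mp hC
    rw [if_neg hC, Finset.prod_eq_zero (Finset.mem_coe.mp hvT)
      (indicator_of_notMem hvC _), mul_zero]

/-- Key bound for composing swap rounding steps. -/
lemma tsum_prod_bound (q : PMF (Set α)) (z w : α → ℝ≥0∞) (s : ℝ≥0∞)
    (hz : ∀ T' : Finset α, q.toOuterMeasure {S | ↑T' ⊆ S} ≤ ∏ v ∈ T', z v) :
    ∀ (T2 T1 : Finset α), Disjoint T1 T2 →
      ∑' C, q C * ((∏ v ∈ T1, C.indicator 1 v) * ∏ v ∈ T2, (s * C.indicator 1 v + w v))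
        ≤ (∏ v ∈ T1, z v) * ∏ v ∈ T2, (s * z v + w v) := by
  classical
  intro T2
  induction T2 using Finset.induction_on with
  | empty =>
    intro T1 _
    simp only [Finset.prod_empty, mul_one]
    rw [tsum_prod_ind q T1]
    exact hz T1
  | @insert a T2 ha IH =>
    intro T1 hdisj
    have haT1 : a ∉ T1 := fun h => (Finset.disjoint_left.mp hdisj h) (Finset.mem_insert_self a T2)
    have hdisj1 : Disjoint (insert a T1) T2 := by
      rw [Finset.disjoint_left]
      intro v hv hvT2
      rcases Finset.mem_insert.mp hv with rfl | hv
      · exact ha hvT2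
      · exact (Finset.disjoint_left.mp hdisj hv) (Finset.mem_insert_of_mem hvT2)
    have hdisj2 : Disjoint T1 T2 :=
      hdisj.mono_right (Finset.subset_insert a T2)
    have hstep : ∀ C : Set α,
        q C * ((∏ v ∈ T1, C.indicator 1 v) * ∏ v ∈ insert a T2, (s * C.indicator 1 v + w v))
        = s * (q C * ((∏ v ∈ insert a T1, C.indicator 1 v) *
            ∏ v ∈ T2, (s * C.indicator 1 v + w v)))
          + w a * (q C * ((∏ v ∈ T1, C.indicator 1 v) *
            ∏ v ∈ T2, (s * C.indicator 1 v + w v))) := by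
      intro C
      rw [Finset.prod_insert ha, Finset.prod_insert haT1]
      ring
    calc ∑' C, q C * ((∏ v ∈ T1, C.indicator 1 v) *
            ∏ v ∈ insert a T2, (s * C.indicator 1 v + w v))
        = s * (∑' C, q C * ((∏ v ∈ insert a T1, C.indicator 1 v) *
              ∏ v ∈ T2, (s * C.indicator 1 v + w v)))
          + w a * (∑' C, q C * ((∏ v ∈ T1, C.indicator 1 v) *
              ∏ v ∈ T2, (s * C.indicator 1 v + w v))) := by
          rw [← ENNReal.tsum_mul_left, ← ENNReal.tsum_mul_left, ← ENNReal.tsum_add]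
          exact tsum_congr hstep
      _ ≤ s * ((∏ v ∈ insert a T1, z v) * ∏ v ∈ T2, (s * z v + w v))
          + w a * ((∏ v ∈ T1, z v) * ∏ v ∈ T2, (s * z v + w v)) :=
          add_le_add (mul_le_mul_right (IH (insert a T1) hdisj1) s)
            (mul_le_mul_right (IH T1 hdisj2) (w a))
      _ = (∏ v ∈ T1, z v) * ∏ v ∈ insert a T2, (s * z v + w v) := by
          rw [Finset.prod_insert ha, Finset.prod_insert haT1]
          ring

/-- Swap rounding a convex combination of bases, given as a weighted list. -/
lemma merge_list (M : Matroid α) (hE : V' ⊆ M.E) (hfin : V'.Finite) {k : ℕ∞}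
    (hk : rkP M.Indep V' = k) :
    ∀ (n : ℕ) (L : List (ℝ≥0∞ × Set α)), L.length = n → L ≠ [] →
      (L.map Prod.fst).sum = 1 →
      (∀ p ∈ L, 0 < p.1) →
      (∀ p ∈ L, M.Indep p.2 ∧ p.2 ⊆ V' ∧ p.2.encard = k) →
      ∃ q : PMF (Set α),
        (∀ C ∈ q.support, M.Indep C ∧ C ⊆ V' ∧ C.encard = k) ∧
        (∀ v : α, q.toOuterMeasure {S | v ∈ S} = xL L v) ∧
        (∀ T : Finset α, q.toOuterMeasure {S | ↑T ⊆ S} ≤ ∏ v ∈ T, xL L v) := by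
  intro n
  induction n using Nat.strong_induction_on with
  | _ n IHn =>
  intro L hlen hne hsum hpos hgood
  match L, hne with
  | [p], _ =>
    have hp1 : p.1 = 1 := by simpa using hsum
    obtain ⟨hIp, hVp, hcp⟩ := hgood p (List.mem_singleton_self p)
    refine ⟨PMF.pure p.2, ?_, ?_, ?_⟩
    · intro C hC
      rw [PMF.support_pure, mem_singleton_iff] at hC
      subst hC
      exact ⟨hIp, hVp, hcp⟩
    · intro v
      rw [PMF.toOuterMeasure_pure_apply]
      simp only [mem_setOf_eq, xL_cons, xL_nil, add_zero, hp1, one_mul]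
      by_cases hv : v ∈ p.2
      · rw [if_pos (show p.2 ∈ {S | v ∈ S} from hv), indicator_of_mem hv, Pi.one_apply]
      · rw [if_neg (show p.2 ∉ {S | v ∈ S} from hv), indicator_of_notMem hv]
    · intro T
      rw [PMF.toOuterMeasure_pure_apply]
      simp only [mem_setOf_eq, xL_cons, xL_nil, add_zero, hp1, one_mul]
      by_cases hT : (↑T : Set α) ⊆ p.2
      · rw [if_pos (show p.2 ∈ {S | (↑T : Set α) ⊆ S} from hT)]
        refine le_of_eq (Finset.prod_eq_one fun v hv => ?_).symm
        rw [indicator_of_mem (hT hv), Pi.one_apply]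
      · rw [if_neg (show p.2 ∉ {S | (↑T : Set α) ⊆ S} from hT)]
        exact zero_le
  | p1 :: p2 :: rest, _ =>
    classical
    set s : ℝ≥0∞ := p1.1 + p2.1 with hs
    have hsum' : s + (rest.map Prod.fst).sum = 1 := by
      rw [hs, ← hsum]
      simp [add_assoc]
    have hs1 : s ≤ 1 := hsum' ▸ le_self_add
    have hs0 : s ≠ 0 := by
      rw [hs]
      simp only [ne_eq, add_eq_zero, not_and]
      intro h
      exact absurd h (hpos p1 (List.mem_cons_self)).ne'
    have hstop : s ≠ ⊤ := (hs1.trans_lt one_lt_top).ne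
    have hγ : p1.1 / s + p2.1 / s = 1 := by
      rw [ENNReal.div_add_div_same, ← hs, ENNReal.div_self hs0 hstop]
    obtain ⟨hI1, hV1, hc1⟩ := hgood p1 (List.mem_cons_self)
    obtain ⟨hI2, hV2, hc2⟩ := hgood p2 (List.mem_cons_of_mem _ (List.mem_cons_self))
    obtain ⟨qC, hqCS, hqCM, hqCC⟩ := merge_two M hE hfin hk hγ _ p1.2 p2.2
      hI1 hV1 hc1 hI2 hV2 hc2 rfl
    -- the continuation PMF for each outcome C
    have hcont : ∀ C : Set α, M.Indep C → C ⊆ V' → C.encard = k →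
        ∃ q : PMF (Set α),
          (∀ D ∈ q.support, M.Indep D ∧ D ⊆ V' ∧ D.encard = k) ∧
          (∀ v : α, q.toOuterMeasure {S | v ∈ S} = xL ((s, C) :: rest) v) ∧
          (∀ T : Finset α, q.toOuterMeasure {S | ↑T ⊆ S} ≤ ∏ v ∈ T, xL ((s, C) :: rest) v) := by
      intro C hIC hVC hcC
      refine IHn (rest.length + 1) (by subst hlen; simp only [List.length_cons]; omega) ((s, C) :: rest) rfl
        (List.cons_ne_nil _ _) ?_ ?_ ?_
      · simpa using hsum'
      · intro p hp
        rcases List.mem_cons.mp hp with rfl | hp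
        · exact pos_iff_ne_zero.mpr hs0
        · exact hpos p (List.mem_cons_of_mem _ (List.mem_cons_of_mem _ hp))
      · intro p hp
        rcases List.mem_cons.mp hp with rfl | hp
        · exact ⟨hIC, hVC, hcC⟩
        · exact hgood p (List.mem_cons_of_mem _ (List.mem_cons_of_mem _ hp))
    set Good : Set α → Prop := fun C => M.Indep C ∧ C ⊆ V' ∧ C.encard = k with hGood
    set F : Set α → PMF (Set α) := fun C =>
      if h : Good C then (hcont C h.1 h.2.1 h.2.2).choose else PMF.pure ∅ with hF
    have hFspec : ∀ C, Good C →
        (∀ D ∈ (F C).support, M.Indep D ∧ D ⊆ V' ∧ D.encard = k) ∧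
        (∀ v : α, (F C).toOuterMeasure {S | v ∈ S} = xL ((s, C) :: rest) v) ∧
        (∀ T : Finset α, (F C).toOuterMeasure {S | ↑T ⊆ S} ≤
          ∏ v ∈ T, xL ((s, C) :: rest) v) := by
      intro C h
      rw [hF]
      simp only [dif_pos h]
      exact (hcont C h.1 h.2.1 h.2.2).choose_spec
    have hGoodC : ∀ C ∈ qC.support, Good C := by
      intro C hC
      obtain ⟨h1, h2, h3⟩ := hqCS C hC
      exact ⟨h1, h2.trans (union_subset hV1 hV2), h3⟩
    refine ⟨qC.bind F, ?_, ?_, ?_⟩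
    · intro D hD
      rw [PMF.support_bind] at hD
      simp only [mem_iUnion] at hD
      obtain ⟨C, hC, hDC⟩ := hD
      exact (hFspec C (hGoodC C hC)).1 D hDC
    · intro v
      rw [PMF.toOuterMeasure_bind_apply]
      have h1 : ∀ C : Set α, qC C * (F C).toOuterMeasure {S | v ∈ S}
          = qC C * (s * C.indicator 1 v + xL rest v) := by
        intro C
        by_cases hC : qC C = 0
        · rw [hC, zero_mul, zero_mul]
        · rw [(hFspec C (hGoodC C hC)).2.1 v, xL_cons]
      rw [tsum_congr h1]
      have h2 : ∀ C : Set α, qC C * (s * C.indicator 1 v + xL rest v)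
          = s * (qC C * ∏ u ∈ {v}, C.indicator 1 u) + qC C * xL rest v := by
        intro C
        rw [Finset.prod_singleton]
        ring
      rw [tsum_congr h2, ENNReal.tsum_add, ENNReal.tsum_mul_left, tsum_prod_ind qC {v},
        ENNReal.tsum_mul_right, PMF.tsum_coe, one_mul]
      have h3 : qC.toOuterMeasure {S | ↑({v} : Finset α) ⊆ S} = qC.toOuterMeasure {S | v ∈ S} := by
        congr 1
        ext S
        simp
      rw [h3, hqCM v, xL_cons, xL_cons, mul_add, ← mul_assoc, ← mul_assoc,
        ENNReal.mul_div_cancel hs0 hstop, ENNReal.mul_div_cancel hs0 hstop, add_assoc]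
    · intro T
      rw [PMF.toOuterMeasure_bind_apply]
      have h1 : ∀ C : Set α, qC C * (F C).toOuterMeasure {S | ↑T ⊆ S}
          ≤ qC C * ((∏ v ∈ (∅ : Finset α), C.indicator 1 v) *
              ∏ v ∈ T, (s * C.indicator 1 v + xL rest v)) := by
        intro C
        by_cases hC : qC C = 0
        · rw [hC, zero_mul, zero_mul]
        · rw [Finset.prod_empty, one_mul]
          refine mul_le_mul_right ?_ _
          refine le_trans ((hFspec C (hGoodC C hC)).2.2 T) (le_of_eq ?_)
          exact Finset.prod_congr rfl fun v _ => by rw [xL_cons]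
      refine le_trans (ENNReal.tsum_le_tsum h1) ?_
      refine le_trans (tsum_prod_bound qC
        (fun v => p1.1 / s * p1.2.indicator 1 v + p2.1 / s * p2.2.indicator 1 v)
        (fun v => xL rest v) s hqCC T ∅ (Finset.disjoint_left.mpr (by simp))) ?_
      rw [Finset.prod_empty, one_mul]
      refine le_of_eq (Finset.prod_congr rfl fun v _ => ?_)
      rw [xL_cons, xL_cons, mul_add, ← mul_assoc, ← mul_assoc,
        ENNReal.mul_div_cancel hs0 hstop, ENNReal.mul_div_cancel hs0 hstop, add_assoc]

lemma pmf_le_one (p : PMF (Set α)) (s : Set (Set α)) : p.toOuterMeasure s ≤ 1 := by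
  rw [PMF.toOuterMeasure_apply, ← PMF.tsum_coe p]
  exact ENNReal.tsum_le_tsum fun C => Set.indicator_le_self s _ C

end Aux

/-- In a `ρ`-DBS `V'` of rank `k` one can sample a random
independent set `S ⊆ V'` of size `k` such that each `v ∈ V'` is in `S` with
probability exactly `1/ρ`, and these events are negatively correlated:
`P[T ⊆ S] ≤ (1/ρ)^{|T|}` for every `T ⊆ V'`. -/
theorem stmt8 {α : Type*} (M : Matroid α) (ρ : ℕ) (hρ : 0 < ρ)
    (V' : Set α) (hV' : IsDBS M ρ V') (k : ℕ∞) (hk : rk M V' = k) :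
    ∃ p : PMF (Set α),
      (∀ S ∈ p.support, M.Indep S ∧ S ⊆ V' ∧ S.encard = k) ∧
      (∀ v ∈ V', p.toOuterMeasure {S | v ∈ S} = 1 / (ρ : ℝ≥0∞)) ∧
      (∀ T ⊆ V', p.toOuterMeasure {S | T ⊆ S} ≤ (1 / (ρ : ℝ≥0∞)) ^ T.ncard) := by
  classical
  obtain ⟨hE, hdV, hdU⟩ := hV'
  rw [rk] at hk
  have hρ0 : (ρ : ℝ≥0∞) ≠ 0 := Nat.cast_ne_zero.mpr hρ.ne'
  have hρtop : (ρ : ℝ≥0∞) ≠ ⊤ := natCast_ne_top ρ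
  -- V' is finite
  have hVfin : V'.Finite := by
    rw [← encard_ne_top_iff]
    intro htop
    rw [densP, htop, ENat.toENNReal_top] at hdV
    rcases eq_or_ne ((rkP M.Indep V' : ℝ≥0∞)) ⊤ with hr | hr
    · rw [hr, ENNReal.div_top] at hdV
      exact hρ0 hdV.symm
    · rw [ENNReal.top_div_of_ne_top hr] at hdV
      exact hρtop hdV.symm
  -- the rank of V' is finite and nonzero
  have hrtop : rkP M.Indep V' ≠ ⊤ :=
    fun h => (encard_ne_top_iff.mpr hVfin) (top_le_iff.mp (h ▸ rkP_le_encard V'))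
  have hr0 : rkP M.Indep V' ≠ 0 := by
    intro h0
    rw [densP, h0] at hdV
    rcases eq_or_ne V'.encard 0 with h | h
    · rw [h] at hdV
      simp only [ENat.toENNReal_zero, ENNReal.zero_div] at hdV
      exact hρ0 hdV.symm
    · rw [ENat.toENNReal_zero, ENNReal.div_zero (fun hh => h (by
        rwa [← ENat.toENNReal_zero, ENat.toENNReal_inj] at hh))] at hdV
      exact hρtop hdV.symm
  have hrcast0 : ((rkP M.Indep V' : ℕ∞) : ℝ≥0∞) ≠ 0 := by
    rwa [ne_eq, ← ENat.toENNReal_zero, ENat.toENNReal_inj]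
  have hrcasttop : ((rkP M.Indep V' : ℕ∞) : ℝ≥0∞) ≠ ⊤ := by
    rwa [ne_eq, ← ENat.toENNReal_top, ENat.toENNReal_inj]
  -- natural number versions
  set kn : ℕ := rn M V' with hkn
  have hknk : (kn : ℕ∞) = k := by rw [hkn, cast_rn hE hVfin subset_rfl, hk]
  have hkr : ((kn : ℕ∞) : ℝ≥0∞) = (rkP M.Indep V' : ℝ≥0∞) := by
    rw [hkn, cast_rn hE hVfin subset_rfl]
  -- |V'| = ρ * kn
  have hcard : V'.ncard = ρ * kn := by
    have h1 : (V'.encard : ℝ≥0∞) = (ρ : ℝ≥0∞) * (rkP M.Indep V' : ℝ≥0∞) := by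
      rw [densP] at hdV
      conv_lhs => rw [← ENNReal.div_mul_cancel hrcast0 hrcasttop
        (b := ((V'.encard : ℕ∞) : ℝ≥0∞)), hdV]
    rw [← hVfin.cast_ncard_eq, ← hkr] at h1
    have h2 : ((V'.ncard : ℕ∞) : ℝ≥0∞) = (((ρ * kn : ℕ) : ℕ∞) : ℝ≥0∞) := by
      rw [h1]
      push_cast
      ring
    rwa [ENat.toENNReal_inj, Nat.cast_inj] at h2
  -- density condition, in ℕ
  have hd : ∀ U ⊆ V', U.ncard ≤ ρ * rn M U := by
    intro U hU
    have hUfin : U.Finite := hVfin.subset hU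
    rcases eq_or_ne U ∅ with rfl | hUne
    · simp
    have hUenc0 : ((U.encard : ℕ∞) : ℝ≥0∞) ≠ 0 := by
      rw [ne_eq, ← ENat.toENNReal_zero, ENat.toENNReal_inj, encard_eq_zero]
      exact hUne
    have hrU0 : rkP M.Indep U ≠ 0 := by
      intro h0
      have := hdU U hU
      rw [densP, h0, ENat.toENNReal_zero, ENNReal.div_zero hUenc0] at this
      exact hρtop (top_le_iff.mp this)
    have hrUtop : ((rkP M.Indep U : ℕ∞) : ℝ≥0∞) ≠ ⊤ := by
      rw [ne_eq, ← ENat.toENNReal_top, ENat.toENNReal_inj]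
      exact fun h => hrtop (top_le_iff.mp (h ▸ rkP_mono hU))
    have hrUcast0 : ((rkP M.Indep U : ℕ∞) : ℝ≥0∞) ≠ 0 := by
      rwa [ne_eq, ← ENat.toENNReal_zero, ENat.toENNReal_inj]
    have h1 : (U.encard : ℝ≥0∞) ≤ (ρ : ℝ≥0∞) * (rkP M.Indep U : ℝ≥0∞) := by
      have hle := hdU U hU
      rw [densP] at hle
      calc (U.encard : ℝ≥0∞)
          = (U.encard : ℝ≥0∞) / (rkP M.Indep U : ℝ≥0∞) * (rkP M.Indep U : ℝ≥0∞) :=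
            (ENNReal.div_mul_cancel hrUcast0 hrUtop).symm
        _ ≤ (ρ : ℝ≥0∞) * (rkP M.Indep U : ℝ≥0∞) := mul_le_mul_left hle _
    rw [← hUfin.cast_ncard_eq, ← cast_rn hE hVfin hU] at h1
    have h2 : ((U.ncard : ℕ∞) : ℝ≥0∞) ≤ (((ρ * rn M U : ℕ) : ℕ∞) : ℝ≥0∞) := by
      refine le_trans h1 (le_of_eq ?_)
      push_cast
      ring
    rwa [ENat.toENNReal_le, Nat.cast_le] at h2
  -- partition into bases
  obtain ⟨B, hBI, hBV, hBk, hBdisj, hBun⟩ :=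
    exists_base_partition M hE hVfin hρ hd hkn.symm hcard
  have hBenc : ∀ i, (B i).encard = k := by
    intro i
    rw [← (hVfin.subset (hBV i)).cast_ncard_eq, hBk i, hknk]
  -- the weighted list
  set L : List (ℝ≥0∞ × Set α) := List.ofFn (fun i : Fin ρ => ((ρ : ℝ≥0∞)⁻¹, B i)) with hL
  have hLlen : L.length = ρ := by rw [hL, List.length_ofFn]
  have hLne : L ≠ [] := by
    intro h
    rw [h] at hLlen
    simp at hLlen
    omega
  have hLsum : (L.map Prod.fst).sum = 1 := by
    rw [hL, List.map_ofFn]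
    rw [List.sum_ofFn]
    simp only [Function.comp_apply]
    rw [Finset.sum_const, Finset.card_univ, Fintype.card_fin, nsmul_eq_mul,
      ENNReal.mul_inv_cancel hρ0 hρtop]
  have hLpos : ∀ p ∈ L, 0 < p.1 := by
    intro p hp
    rw [hL, List.mem_ofFn] at hp
    obtain ⟨i, hi⟩ := hp
    rw [← hi]
    exact ENNReal.inv_pos.mpr hρtop
  have hLgood : ∀ p ∈ L, M.Indep p.2 ∧ p.2 ⊆ V' ∧ p.2.encard = k := by
    intro p hp
    rw [hL, List.mem_ofFn] at hp
    obtain ⟨i, hi⟩ := hp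
    rw [← hi]
    exact ⟨hBI i, hBV i, hBenc i⟩
  -- the fractional vector is uniform on V'
  have hxL : ∀ v ∈ V', xL L v = 1 / (ρ : ℝ≥0∞) := by
    intro v hv
    have hvB : ∃ i, v ∈ B i := by
      rw [← mem_iUnion]
      exact hBun ▸ hv
    obtain ⟨i0, hi0⟩ := hvB
    have huniq : ∀ j, j ≠ i0 → v ∉ B j := by
      intro j hj hvj
      exact (hBdisj hj).le_bot ⟨hvj, hi0⟩
    rw [hL, xL, List.map_ofFn, List.sum_ofFn]
    simp only [Function.comp_apply]
    rw [Finset.sum_eq_single i0]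
    · rw [indicator_of_mem hi0, Pi.one_apply, mul_one, one_div]
    · intro j _ hj
      rw [indicator_of_notMem (huniq j hj), mul_zero]
    · intro h
      exact absurd (Finset.mem_univ i0) h
  obtain ⟨q, hqS, hqM, hqC⟩ := merge_list M hE hVfin hk L.length L rfl hLne hLsum hLpos hLgood
  refine ⟨q, hqS, ?_, ?_⟩
  · intro v hv
    rw [hqM v, hxL v hv]
  · intro T hT
    rcases T.finite_or_infinite with hTfin | hTinf
    · have hcoe : T = ↑hTfin.toFinset := by simp
      have h1 := hqC hTfin.toFinset
      rw [← hcoe] at h1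
      refine le_trans h1 (le_of_eq ?_)
      rw [Finset.prod_congr rfl (fun v hv => hxL v (hT (by rwa [← hTfin.mem_toFinset]))),
        Finset.prod_const, ncard_eq_toFinset_card T hTfin]
    · rw [hTinf.ncard, pow_zero]
      exact pmf_le_one q _
  

end Paper
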